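/- arXiv:2107.01157 — 7 statements merged into one kernel-verified Lean document; each statement's English description precedes it below -/
import Mathlib

section
/- If G is a finite group of odd order, then the matching number of the power graph of G equals (|G| - 1)/2. -/
/-!
In a group of odd order no element other than `1` is its own inverse, and `x⁻¹` is always a power
of `x`; so pairing every `x ≠ 1` with `x⁻¹` is a matching of the power graph that covers all
vertices but `1`. A matching never has more than half the vertices' worth of edges, hence this
near-perfect matching is maximum.
-/

open SimpleGraph

def powerGraph (G : Type*) [Group G] : SimpleGraph G where
  Adj x y := x ≠ y ∧ ((∃ n : ℕ, y ^ n = x) ∨ (∃ n : ℕ, x ^ n = y))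
  symm := ⟨fun x y ⟨h, hp⟩ => ⟨h.symm, hp.symm⟩⟩
  loopless := ⟨fun x ⟨h, _⟩ => h rfl⟩

noncomputable def matchingNumber {V : Type*} (Γ : SimpleGraph V) : ℕ :=
  sSup {n | ∃ M : Γ.Subgraph, M.IsMatching ∧ M.edgeSet.ncard = n}

def hasPerfectMatching {V : Type*} (Γ : SimpleGraph V) : Prop :=
  ∃ M : Γ.Subgraph, M.IsPerfectMatching

namespace SimpleGraph.Subgraph

variable {V : Type*} {Γ : SimpleGraph V} {M : Γ.Subgraph}

theorem IsMatching.ncard_verts [Finite V] (hM : M.IsMatching) :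
    M.verts.ncard = 2 * M.edgeSet.ncard := by
  classical
  have := Fintype.ofFinite V
  have hdeg (v : V) : M.spanningCoe.degree v = if v ∈ M.verts then 1 else 0 := by
    split_ifs with hv
    · rw [degree_spanningCoe]
      exact (isMatching_iff_forall_degree.mp hM) v hv
    · rw [degree_eq_zero_iff_notMem_support, SimpleGraph.mem_support]
      exact fun ⟨_, hvw⟩ => hv hvw.fst_mem
  have hsum := M.spanningCoe.sum_degrees_eq_twice_card_edges
  simp only [hdeg, Finset.sum_boole, Nat.cast_id] at hsum
  rw [← edgeSet_spanningCoe, ← coe_edgeFinset, Set.ncard_coe_finset, ← hsum,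
    Set.ncard_eq_toFinset_card']
  congr 1
  ext
  simp

end SimpleGraph.Subgraph

theorem matchingNumber_eq_of_isMatching {V : Type*} [Finite V] {Γ : SimpleGraph V}
    (M : Γ.Subgraph) (hM : M.IsMatching) (hverts : Nat.card V ≤ M.verts.ncard + 1) :
    matchingNumber Γ = Nat.card V / 2 := by
  refine IsGreatest.csSup_eq ⟨⟨M, hM, ?_⟩, ?_⟩
  · have := hM.ncard_verts
    have := M.verts.ncard_le_card
    omega
  · rintro _ ⟨M', hM', rfl⟩
    have := hM'.ncard_verts
    have := M'.verts.ncard_le_card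
    omega

section PowerGraph

variable {G : Type*} [Group G]

theorem IsOfFinOrder.inv_mem_powers {x : G} (hx : IsOfFinOrder x) : x⁻¹ ∈ Submonoid.powers x :=
  hx.mem_powers_iff_mem_zpowers.mpr (Subgroup.inv_mem _ (Subgroup.mem_zpowers x))

theorem powerGraph_adj_inv {x : G} (hx : IsOfFinOrder x) (hne : x ≠ x⁻¹) :
    (powerGraph G).Adj x x⁻¹ :=
  ⟨hne, .inr hx.inv_mem_powers⟩

def inverseMatching (hG : IsMulTorsion G) : (powerGraph G).Subgraph where
  verts := {x | x ≠ x⁻¹}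
  Adj x y := x ≠ x⁻¹ ∧ y = x⁻¹
  adj_sub := by
    rintro x _ ⟨hx, rfl⟩
    exact powerGraph_adj_inv (hG x) hx
  edge_vert := And.left
  symm := by
    constructor
    rintro x _ ⟨hx, rfl⟩
    exact ⟨by simpa [eq_comm] using hx, (inv_inv x).symm⟩

theorem inverseMatching_isMatching (hG : IsMulTorsion G) : (inverseMatching hG).IsMatching :=
  fun x hx => ⟨x⁻¹, ⟨hx, rfl⟩, fun _ hy => hy.2⟩

theorem eq_one_of_eq_inv_of_odd_card (hG : Odd (Nat.card G)) {x : G} (hx : x = x⁻¹) : x = 1 := by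
  have hsq : x ^ 2 = 1 := by
    rw [sq]
    exact mul_eq_one_iff_eq_inv.mpr hx
  have hcop : Nat.Coprime 2 (Nat.card G) := Nat.coprime_two_left.mpr hG
  exact orderOf_eq_one_iff.mp
    (Nat.eq_one_of_dvd_coprimes hcop (orderOf_dvd_of_pow_eq_one hsq) (orderOf_dvd_natCard x))

theorem ncard_inverseMatching_verts [Finite G] (hG : IsMulTorsion G) (hodd : Odd (Nat.card G)) :
    (inverseMatching hG).verts.ncard = Nat.card G - 1 := by
  have : (inverseMatching hG).verts = {1}ᶜ := by
    ext x
    simp only [inverseMatching, Set.mem_ofPred_eq, Set.mem_compl_singleton_iff]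
    exact ⟨fun hx h1 => hx (by simp [h1]), fun h1 hx => h1 (eq_one_of_eq_inv_of_odd_card hodd hx)⟩
  rw [this, Set.ncard_compl, Set.ncard_singleton]

end PowerGraph

theorem stmt0 (G : Type*) [Group G] [Fintype G] (h : Odd (Fintype.card G)) :
    matchingNumber (powerGraph G) = (Fintype.card G - 1) / 2 := by
  rw [← Nat.card_eq_fintype_card] at h ⊢
  have hverts := ncard_inverseMatching_verts isMulTorsion_of_finite h
  rw [matchingNumber_eq_of_isMatching _ (inverseMatching_isMatching _) (by omega)]
  obtain ⟨k, hk⟩ := h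
  omega
end

section
/- Let G be a finite group of even order, I(G) its set of involutions, and O(G) its set of elements of odd order. Then every matching in the power graph of G leaves at least |I(G)| - |O(G)| vertices unmatched. -/
/-!
For `x` of even order, `halfPow x = x ^ (orderOf x / 2)` is the unique involution of `⟨x⟩`.
Adjacent vertices of even order therefore have the same `halfPow`, and inversion pairs off the
fibre `S_t = {x | halfPow x = t}` of an involution `t` except for `t` itself, so `|S_t|` is odd.
Hence a matching cannot pair `S_t` off inside itself: some `z ∈ S_t` is unmatched or matched to
an element of odd order. Sending `t` to that vertex is injective, so
`|I(G)| ≤ |unmatched| + |O(G)|`.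
-/

open SimpleGraph

open Finset

theorem Finset.even_card_of_involution {α : Type*} {s : Finset α} (g : α → α)
    (hg : ∀ a ∈ s, g a ≠ a) (g_mem : ∀ a ∈ s, g a ∈ s) (g_inv : ∀ a, g (g a) = a) :
    Even #s := by
  have : ∑ _a ∈ s, (1 : ZMod 2) = 0 :=
    Finset.sum_involution (fun a _ => g a) (fun _ _ => rfl) (fun a ha _ => hg a ha) g_mem
      (fun a _ => g_inv a)
  simpa [ZMod.natCast_eq_zero_iff_even] using this

theorem SimpleGraph.Subgraph.IsMatching.exists_notMem_verts_or_adj_notMem_of_odd_card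
    {V : Type*} {Γ : SimpleGraph V} {M : Γ.Subgraph} (hM : M.IsMatching) {s : Finset V}
    (hs : Odd #s) :
    ∃ v ∈ s, v ∉ M.verts ∨ ∃ w, M.Adj v w ∧ w ∉ s := by
  by_contra! h
  have hMs : (M.induce s).IsMatching := by
    intro v hv
    obtain ⟨w, hvw, huniq⟩ := hM (h v hv).1
    exact ⟨w, ⟨hv, (h v hv).2 w hvw, hvw⟩, fun w' hw' => huniq w' hw'.2.2⟩
  have : Fintype (M.induce s).verts := s.fintypeCoeSort
  exact Nat.not_even_iff_odd.2 hs (by simpa using hMs.even_card)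

section HalfPow

variable {G : Type*} [Group G]

/-- For `x` of odd order this is not an involution: then `orderOf (halfPow x)` is odd. -/
noncomputable def halfPow (x : G) : G := x ^ (orderOf x / 2)

theorem orderOf_halfPow [Finite G] {x : G} (hx : Even (orderOf x)) : orderOf (halfPow x) = 2 :=
  orderOf_pow_orderOf_div (orderOf_pos x).ne' hx.two_dvd

theorem even_orderOf_of_orderOf_halfPow {x : G} (hx : orderOf (halfPow x) = 2) :
    Even (orderOf x) :=
  even_iff_two_dvd.2 (hx ▸ orderOf_pow_dvd _)

theorem halfPow_of_orderOf_eq_two {t : G} (ht : orderOf t = 2) : halfPow t = t := by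
  simp [halfPow, ht]

theorem halfPow_inv (x : G) : halfPow x⁻¹ = (halfPow x)⁻¹ := by
  simp [halfPow, orderOf_inv, inv_pow]

theorem eq_halfPow_of_mem_zpowers [Finite G] {x s : G} (hs : s ∈ Subgroup.zpowers x)
    (h2 : orderOf s = 2) : s = halfPow x := by
  classical
  have : Fintype G := Fintype.ofFinite G
  have hx : Even (orderOf x) := even_iff_two_dvd.2 (h2 ▸ orderOf_dvd_of_mem_zpowers hs)
  have hcard : 2 ∣ Fintype.card (Subgroup.zpowers x) := by
    rw [Fintype.card_zpowers]; exact hx.two_dvd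
  have hunique := (IsCyclic.card_orderOf_eq_totient hcard).trans Nat.totient_two
  have := card_le_one.1 hunique.le ⟨s, hs⟩ (by simpa using h2)
    ⟨halfPow x, pow_mem (Subgroup.mem_zpowers x) _⟩
    (mem_filter.2 ⟨mem_univ _, (Subgroup.orderOf_mk _ _).trans (orderOf_halfPow hx)⟩)
  exact congrArg Subtype.val this

theorem halfPow_pow [Finite G] {x : G} {n : ℕ} (hxn : Even (orderOf (x ^ n))) :
    halfPow (x ^ n) = halfPow x := by
  refine eq_halfPow_of_mem_zpowers ?_ (orderOf_halfPow hxn)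
  rw [halfPow, ← pow_mul]
  exact pow_mem (Subgroup.mem_zpowers x) _

theorem halfPow_eq_of_adj [Finite G] {x y : G} (hxy : (powerGraph G).Adj x y)
    (hx : Even (orderOf x)) (hy : Even (orderOf y)) : halfPow x = halfPow y := by
  obtain ⟨-, ⟨n, rfl⟩ | ⟨n, rfl⟩⟩ := hxy
  · exact halfPow_pow hx
  · exact (halfPow_pow hy).symm

theorem odd_card_filter_halfPow_eq [Fintype G] [DecidableEq G] {t : G} (ht : orderOf t = 2) :
    Odd #{x | halfPow x = t} := by
  have hmem : t ∈ ({x | halfPow x = t} : Finset G) := by simp [halfPow_of_orderOf_eq_two ht]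
  rw [← card_erase_add_one hmem, Nat.odd_add_one, Nat.not_odd_iff_even]
  refine Finset.even_card_of_involution (·⁻¹) ?_ ?_ inv_inv
  · intro a ha hinv
    obtain ⟨hat, hfiber⟩ := mem_erase.1 ha
    replace hfiber : halfPow a = t := (mem_filter.1 hfiber).2
    have ha1 : a ≠ 1 := by
      rintro rfl
      rw [halfPow, one_pow] at hfiber
      simp [← hfiber] at ht
    have ha2 : orderOf a = 2 :=
      orderOf_eq_prime_iff.2 ⟨by rw [sq, ← inv_eq_iff_mul_eq_one, hinv], ha1⟩
    exact hat (halfPow_of_orderOf_eq_two ha2 ▸ hfiber)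
  · intro a ha
    obtain ⟨hat, hfiber⟩ := mem_erase.1 ha
    replace hfiber : halfPow a = t := (mem_filter.1 hfiber).2
    have htinv := inv_eq_self_of_orderOf_eq_two ht
    refine mem_erase.2 ⟨fun h => hat ?_, mem_filter.2 ⟨mem_univ _, ?_⟩⟩
    · rw [← inv_inv a, h, htinv]
    · rw [halfPow_inv, hfiber, htinv]

end HalfPow

section AccountsFor

variable {G : Type*} [Group G] {M : (powerGraph G).Subgraph}

def AccountsFor (M : (powerGraph G).Subgraph) (v t : G) : Prop :=
  (v ∉ M.verts ∧ halfPow v = t) ∨ (Odd (orderOf v) ∧ ∃ z, M.Adj v z ∧ halfPow z = t)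

theorem AccountsFor.mem {v t : G} (h : AccountsFor M v t) :
    v ∈ M.vertsᶜ ∪ {x | Odd (orderOf x)} := by
  rcases h with ⟨hv, -⟩ | ⟨hv, -⟩
  exacts [Or.inl hv, Or.inr hv]

theorem AccountsFor.unique (hM : M.IsMatching) {v t t' : G} (h : AccountsFor M v t)
    (h' : AccountsFor M v t') : t = t' := by
  rcases h with ⟨hv, rfl⟩ | ⟨-, z, hvz, rfl⟩ <;>
    rcases h' with ⟨hv', rfl⟩ | ⟨-, z', hvz', rfl⟩
  · rfl
  · exact absurd (M.edge_vert hvz') hv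
  · exact absurd (M.edge_vert hvz) hv'
  · obtain ⟨_, -, huniq⟩ := hM (M.edge_vert hvz)
    rw [huniq z hvz, huniq z' hvz']

theorem exists_accountsFor [Fintype G] (hM : M.IsMatching) {t : G} (ht : orderOf t = 2) :
    ∃ v, AccountsFor M v t := by
  classical
  obtain ⟨z, hz, hzM | ⟨w, hzw, hw⟩⟩ :=
    hM.exists_notMem_verts_or_adj_notMem_of_odd_card (odd_card_filter_halfPow_eq ht)
  all_goals replace hz : halfPow z = t := (mem_filter.1 hz).2
  · exact ⟨z, Or.inl ⟨hzM, hz⟩⟩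
  refine ⟨w, Or.inr ⟨Nat.not_even_iff_odd.1 fun hw_even => hw ?_, z, M.adj_symm hzw, hz⟩⟩
  have hz_even := even_orderOf_of_orderOf_halfPow (hz ▸ ht)
  exact mem_filter.2
    ⟨mem_univ _, by rw [← halfPow_eq_of_adj (M.adj_sub hzw) hz_even hw_even, hz]⟩

end AccountsFor

theorem stmt4_general (G : Type*) [Group G] [Fintype G]
    (M : (powerGraph G).Subgraph) (hM : M.IsMatching) :
    {t : G | orderOf t = 2}.ncard - {x : G | Odd (orderOf x)}.ncard ≤ M.vertsᶜ.ncard := by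
  choose! f hf using fun t (ht : t ∈ {t : G | orderOf t = 2}) => exists_accountsFor hM ht
  rw [tsub_le_iff_right]
  calc {t : G | orderOf t = 2}.ncard ≤ (M.vertsᶜ ∪ {x : G | Odd (orderOf x)}).ncard :=
        Set.ncard_le_ncard_of_injOn f (fun t ht => (hf t ht).mem)
          (fun t ht t' ht' hf_eq => (hf t ht).unique hM (hf_eq ▸ hf t' ht')) (Set.toFinite _)
    _ ≤ M.vertsᶜ.ncard + {x : G | Odd (orderOf x)}.ncard := Set.ncard_union_le _ _

theorem stmt4 (G : Type*) [Group G] [Fintype G] (h : Even (Fintype.card G))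
    (M : (powerGraph G).Subgraph) (hM : M.IsMatching) :
    {t : G | orderOf t = 2}.ncard - {x : G | Odd (orderOf x)}.ncard ≤ M.vertsᶜ.ncard :=
  stmt4_general G M hM
end

section
/- Let G be a finite group of even order. If the power graph of G has a perfect matching, then the number of involutions in G is at most the number of elements of odd order in G. -/
/-!
For an involution `t`, the set of elements having `t` as a power has odd size, since inversion
permutes it with `t` as its only fixed point (a cyclic group has at most one involution).
A perfect matching must therefore match some `x` with `t ∈ ⟨x⟩` to a partner `y` with `t ∉ ⟨y⟩`.
Then `y ∈ ⟨x⟩`, and `y` has odd order: otherwise the involution of `⟨y⟩ ≤ ⟨x⟩` would be `t`.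
Distinct involutions give distinct partners `y`, since `x` is determined by `y` and `⟨x⟩`
contains only one involution.
-/

open SimpleGraph

open Subgroup

theorem Set.even_ncard_of_involution {α : Type*} {s : Set α} {f : α → α}
    (hmaps : Set.MapsTo f s s) (hinv : ∀ x ∈ s, f (f x) = x) (hfix : ∀ x ∈ s, f x ≠ x) :
    Even s.ncard := by
  obtain hs | hs := s.finite_or_infinite
  · classical
    have hsum : ∑ _x ∈ hs.toFinset, (1 : ZMod 2) = 0 :=
      Finset.sum_involution (fun x _ => f x) (fun _ _ => by decide)
        (fun x hx _ => hfix x (hs.mem_toFinset.mp hx))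
        (fun x hx => hs.mem_toFinset.mpr (hmaps (hs.mem_toFinset.mp hx)))
        (fun x hx => hinv x (hs.mem_toFinset.mp hx))
    rw [Finset.sum_const, nsmul_one, ZMod.natCast_eq_zero_iff, ← Set.ncard_eq_toFinset_card s hs]
      at hsum
    exact even_iff_two_dvd.mpr hsum
  · rw [hs.ncard]
    exact Even.zero

theorem SimpleGraph.Subgraph.IsPerfectMatching.exists_adj_notMem_of_odd_ncard {V : Type*}
    {Γ : SimpleGraph V} {M : Γ.Subgraph} (hM : M.IsPerfectMatching) {s : Set V}
    (hs : Odd s.ncard) : ∃ x ∈ s, ∃ y ∉ s, M.Adj x y := by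
  by_contra! hclosed
  have hmatch : (M.induce s).IsMatching := by
    rintro x (hx : x ∈ s)
    obtain ⟨y, hxy, huniq⟩ := hM.1 (hM.2 x)
    have hy : y ∈ s := by_contra fun hy => hclosed x hx y hy hxy
    exact ⟨y, ⟨hx, hy, hxy⟩, fun z hz => huniq z hz.2.2⟩
  have : Fintype (M.induce s).verts := (Set.finite_of_ncard_ne_zero hs.pos.ne').fintype
  have heven := hmatch.even_card
  rw [Set.toFinset_card, Fintype.card_eq_nat_card, Subgraph.induce_verts, Nat.card_coe_set_eq]
    at heven
  exact Nat.not_even_iff_odd.mpr hs heven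

theorem IsCyclic.eq_of_orderOf_eq_two {α : Type*} [Group α] [Finite α] [IsCyclic α] {a b : α}
    (ha : orderOf a = 2) (hb : orderOf b = 2) : a = b := by
  classical
  have := Fintype.ofFinite α
  have hsq {c : α} (hc : orderOf c = 2) : c ^ 2 = 1 := hc ▸ pow_orderOf_eq_one c
  have hne_one {c : α} (hc : orderOf c = 2) : c ≠ 1 := by rintro rfl; simp at hc
  by_contra hab
  have hsub : ({1, a, b} : Finset α) ⊆ Finset.univ.filter fun c => c ^ 2 = 1 := by
    intro c hc
    simp only [Finset.mem_insert, Finset.mem_singleton] at hc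
    rcases hc with rfl | rfl | rfl <;> simp [hsq ha, hsq hb]
  have hcard := (Finset.card_le_card hsub).trans (IsCyclic.card_pow_eq_one_le two_pos)
  rw [Finset.card_insert_of_notMem, Finset.card_pair hab] at hcard
  · omega
  · simp [eq_comm, hne_one ha, hne_one hb]

section FiniteGroup

variable {G : Type*} [Group G] [Finite G]

theorem eq_of_mem_zpowers_of_orderOf_eq_two {x a b : G} (ha : a ∈ zpowers x)
    (hb : b ∈ zpowers x) (ha2 : orderOf a = 2) (hb2 : orderOf b = 2) : a = b :=
  congrArg Subtype.val <| IsCyclic.eq_of_orderOf_eq_two (a := ⟨a, ha⟩) (b := ⟨b, hb⟩)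
    (by rwa [Subgroup.orderOf_mk]) (by rwa [Subgroup.orderOf_mk])

theorem powerGraph_adj_iff {x y : G} :
    (powerGraph G).Adj x y ↔ x ≠ y ∧ (x ∈ zpowers y ∨ y ∈ zpowers x) := by
  simp only [powerGraph, ← Submonoid.mem_powers_iff, mem_powers_iff_mem_zpowers]

theorem odd_ncard_setOf_mem_zpowers {t : G} (ht : orderOf t = 2) :
    Odd {x : G | t ∈ zpowers x}.ncard := by
  have hsdiff : Even ({x : G | t ∈ zpowers x} \ {t}).ncard := by
    refine Set.even_ncard_of_involution (f := (·⁻¹)) ?_ (fun x _ => inv_inv x) ?_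
    · rintro x ⟨hx, hxt⟩
      refine ⟨by simpa [zpowers_inv] using hx, fun (h : x⁻¹ = t) => hxt ?_⟩
      rw [Set.mem_singleton_iff, ← inv_inv x, h, inv_eq_self_of_orderOf_eq_two ht]
    · rintro x ⟨hx, hxt⟩ hinv
      have hx1 : x ≠ 1 := by
        rintro rfl
        simp_all
      have hx2 : orderOf x = 2 :=
        orderOf_eq_prime (by rw [sq]; exact inv_eq_iff_mul_eq_one.mp hinv) hx1
      exact hxt (eq_of_mem_zpowers_of_orderOf_eq_two (mem_zpowers x) hx hx2 ht)
  rw [← Set.ncard_sdiff_singleton_add_one (show t ∈ {x : G | t ∈ zpowers x} from mem_zpowers t)]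
  exact hsdiff.add_one

theorem odd_orderOf_of_mem_zpowers {t x y : G} (ht : orderOf t = 2) (htx : t ∈ zpowers x)
    (hyx : y ∈ zpowers x) (hty : t ∉ zpowers y) : Odd (orderOf y) := by
  by_contra heven
  rw [Nat.not_odd_iff_even, even_iff_two_dvd] at heven
  have hy2 := orderOf_pow_orderOf_div (orderOf_pos y).ne' heven
  have hmem : y ^ (orderOf y / 2) ∈ zpowers y := pow_mem (mem_zpowers y) _
  exact hty (eq_of_mem_zpowers_of_orderOf_eq_two (zpowers_le.mpr hyx hmem) htx hy2 ht ▸ hmem)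

end FiniteGroup

theorem stmt5_general (G : Type*) [Group G] [Fintype G]
    (hpm : hasPerfectMatching (powerGraph G)) :
    {t : G | orderOf t = 2}.ncard ≤ {x : G | Odd (orderOf x)}.ncard := by
  obtain ⟨M, hM⟩ := hpm
  have hescape (t : G) (ht : orderOf t = 2) :
      ∃ x, t ∈ zpowers x ∧ ∃ y, t ∉ zpowers y ∧ M.Adj x y :=
    hM.exists_adj_notMem_of_odd_ncard (odd_ncard_setOf_mem_zpowers ht)
  choose! x htx y hty hxy using hescape
  refine Set.ncard_le_ncard_of_injOn y (fun t ht => ?_) (fun t ht s hs hts => ?_)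
  · obtain ⟨-, hxy' | hyx⟩ := powerGraph_adj_iff.mp (M.adj_sub (hxy t ht))
    · exact absurd (zpowers_le.mpr hxy' (htx t ht)) (hty t ht)
    · exact odd_orderOf_of_mem_zpowers ht (htx t ht) hyx (hty t ht)
  · have hx : x t = x s := hM.1.eq_of_adj_right (hxy t ht) (hts ▸ hxy s hs)
    exact eq_of_mem_zpowers_of_orderOf_eq_two (htx t ht) (hx ▸ htx s hs) ht hs

theorem stmt5 (G : Type*) [Group G] [Fintype G] (h : Even (Fintype.card G))
    (hpm : hasPerfectMatching (powerGraph G)) :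
    {t : G | orderOf t = 2}.ncard ≤ {x : G | Odd (orderOf x)}.ncard :=
  stmt5_general G hpm
end

section
/- Let G be a finite group of even order, S the set of involutions of G, and O(C_G(S)) the set of elements of odd order in the centralizer of S. If |S| ≤ |O(C_G(S))|, then the power graph of G has a perfect matching. -/
/-!
Inversion pairs up every `g` with `g ^ 2 ≠ 1` with a neighbour `g⁻¹`, so only `1` and the
involutions are left to match; since `|G|` is even and inversion fixes exactly these elements,
there is an odd number `2k + 1` of involutions. Choose an inverse-closed set `C ∋ 1` of `2k + 1`
odd-order elements centralising all involutions. An element `s * y` with `s ^ 2 = 1`, `y ∈ C`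
determines `s` and `y` (raise it to an odd power killing `y`), so these products form a grid
`{1, involutions} × C` inside `G`, closed under inversion. In the power graph, `s * y` is adjacent
to both `s` and `y`; this is enough to match the grid perfectly, row `1` being matched into the
other rows. Outside the grid every element is matched with its inverse.
-/

open SimpleGraph

open Function Set

theorem hasPerfectMatching_of_involutive {V : Type*} {Γ : SimpleGraph V} {f : V → V}
    (hf : Involutive f) (hadj : ∀ v, Γ.Adj v (f v)) : hasPerfectMatching Γ :=
  ⟨{ verts := univ
     Adj v w := w = f v
     adj_sub := by rintro v _ rfl; exact hadj v
     edge_vert := fun _ => mem_univ _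
     symm := ⟨fun v w h => by rw [h, hf v]⟩ },
    Subgraph.isPerfectMatching_iff.2 fun v => ⟨f v, rfl, fun _ h => h⟩⟩

theorem hasPerfectMatching_of_injOn {P V : Type*} {Γ : SimpleGraph V} {m : P → V} {D : Set P}
    (hm : InjOn m D) {ψ : P → P} (hψD : MapsTo ψ D D) (hψ : ∀ p ∈ D, ψ (ψ p) = p)
    (hψadj : ∀ p ∈ D, Γ.Adj (m p) (m (ψ p))) {κ : V → V} (hκ : Involutive κ)
    (hκD : MapsTo κ (m '' D)ᶜ (m '' D)ᶜ) (hκadj : ∀ v ∉ m '' D, Γ.Adj v (κ v)) :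
    hasPerfectMatching Γ := by
  classical
  let f : V → V := fun v => if h : v ∈ m '' D then m (ψ h.choose) else κ v
  have hf_image : ∀ p ∈ D, f (m p) = m (ψ p) := by
    intro p hp
    have h : m p ∈ m '' D := mem_image_of_mem m hp
    obtain ⟨hD, hm_eq⟩ := h.choose_spec
    simp only [f, dif_pos h, hm hD hp hm_eq]
  have hf_compl : ∀ v ∉ m '' D, f v = κ v := fun v hv => dif_neg hv
  refine hasPerfectMatching_of_involutive (f := f) (fun v => ?_) (fun v => ?_)
  · by_cases hv : v ∈ m '' D
    · obtain ⟨p, hp, rfl⟩ := hv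
      rw [hf_image p hp, hf_image _ (hψD hp), hψ p hp]
    · rw [hf_compl v hv, hf_compl _ (hκD hv), hκ v]
  · by_cases hv : v ∈ m '' D
    · obtain ⟨p, hp, rfl⟩ := hv
      rw [hf_image p hp]
      exact hψadj p hp
    · rw [hf_compl v hv]
      exact hκadj v hv

theorem Set.exists_subset_inv_mem_ncard_eq {α : Type*} [InvolutiveInv α] {A : Set α}
    (hAinv : ∀ x ∈ A, x⁻¹ ∈ A) (hfree : ∀ x ∈ A, x⁻¹ ≠ x) :
    ∀ {k : ℕ}, 2 * k ≤ A.ncard → ∃ B ⊆ A, (∀ x ∈ B, x⁻¹ ∈ B) ∧ B.ncard = 2 * k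
  | 0, _ => ⟨∅, empty_subset A, by simp, by simp⟩
  | k + 1, hk => by
    obtain ⟨B, hBA, hBinv, hBcard⟩ := exists_subset_inv_mem_ncard_eq hAinv hfree (k := k) (by omega)
    have hB : B.Finite := (finite_of_ncard_pos (by omega)).subset hBA
    obtain ⟨x, hxA, hxB⟩ := exists_mem_notMem_of_ncard_lt_ncard (t := A) (by omega) hB
    have hxiB : x⁻¹ ∉ B := fun h => hxB (inv_inv x ▸ hBinv _ h)
    have hx : x ∉ insert x⁻¹ B := by
      rintro (h | h)
      · exact hfree x hxA h.symm
      · exact hxB h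
    refine ⟨insert x (insert x⁻¹ B), ?_, ?_, ?_⟩
    · exact insert_subset hxA (insert_subset (hAinv x hxA) hBA)
    · rintro y (rfl | rfl | hy)
      · exact mem_insert_of_mem _ (mem_insert _ _)
      · rw [inv_inv]; exact mem_insert _ _
      · exact mem_insert_of_mem _ (mem_insert_of_mem _ (hBinv y hy))
    · rw [ncard_insert_of_notMem hx (hB.insert _), ncard_insert_of_notMem hxiB hB, hBcard]
      ring

section Partner

variable {α β : Type*} [DecidableEq α] [DecidableEq β] [One α] [DivisionMonoid β]

/-- Think of `α × β` as a grid with rows `α` and columns `β`. Row `1` is matched into the other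
rows through `z`: the cell `(1, y)` goes to `(ρ y, y)`, where `ρ` is inverse to `z`. In every other
row `s`, the cell `(s, z s)` is taken by row `1`, `(s, 1)` is paired with `(s, (z s)⁻¹)` and the
remaining cells with their inverses. -/
def partner (z : α → β) (ρ : β → α) (p : α × β) : α × β :=
  if p.1 = 1 then (ρ p.2, p.2)
  else if p.2 = z p.1 then (1, p.2)
  else if p.2 = 1 then (p.1, (z p.1)⁻¹)
  else if p.2 = (z p.1)⁻¹ then (p.1, 1)
  else (p.1, p.2⁻¹)

variable {A : Set α} {C : Set β} {z : α → β} {ρ : β → α}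

theorem partner_mapsTo (hz : MapsTo z A C) (hρ : MapsTo ρ C A) (hC1 : 1 ∈ C)
    (hCinv : ∀ y ∈ C, y⁻¹ ∈ C) :
    MapsTo (partner z ρ) (insert 1 A ×ˢ C) (insert 1 A ×ˢ C) := by
  rintro ⟨s, y⟩ ⟨hs, hy⟩
  unfold partner
  split_ifs with hs1
  · exact ⟨Or.inr (hρ hy), hy⟩
  · exact ⟨Or.inl rfl, hy⟩
  · exact ⟨hs, hCinv _ (hz (hs.resolve_left hs1))⟩
  · exact ⟨hs, hC1⟩
  · exact ⟨hs, hCinv _ hy⟩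

theorem partner_partner (h1A : (1 : α) ∉ A) (hz : MapsTo z A C) (hρ : MapsTo ρ C A)
    (hzρ : InvOn ρ z A C) (hC : ∀ y ∈ C, y⁻¹ = y → y = 1) :
    ∀ p ∈ insert 1 A ×ˢ C, partner z ρ (partner z ρ p) = p := by
  rintro ⟨s, y⟩ ⟨hs, hy⟩
  by_cases hs1 : s = 1
  · subst hs1
    have hρy : ρ y ≠ 1 := fun h => h1A (h ▸ hρ hy)
    simp [partner, hρy, hzρ.2 hy]
  have hsA : s ∈ A := hs.resolve_left hs1
  by_cases hyz : y = z s
  · simp [partner, hs1, hyz, hzρ.1 hsA]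
  by_cases hy1 : y = 1
  · subst hy1
    have hz1 : z s ≠ 1 := Ne.symm hyz
    have hzinv : (z s)⁻¹ ≠ z s := fun h => hz1 (hC _ (hz hsA) h)
    simp [partner, hs1, hz1, Ne.symm hz1, hzinv]
  by_cases hyzi : y = (z s)⁻¹
  · subst hyzi
    have hz1 : z s ≠ 1 := by simpa using hy1
    simp [partner, hs1, hyz, hz1, Ne.symm hz1]
  · simp [partner, hs1, hyz, hy1, hyzi, inv_eq_iff_eq_inv]

end Partner

section PowerGraph

variable {G : Type*} [Group G]

/-- The paper's `O(C_G(S))`, with `S` the set of involutions. -/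
def oddCentralizer (G : Type*) [Group G] : Set G :=
  {x | Odd (orderOf x) ∧ ∀ t : G, orderOf t = 2 → Commute t x}

theorem one_mem_oddCentralizer : (1 : G) ∈ oddCentralizer G :=
  ⟨by simp, fun t _ => Commute.one_right t⟩

theorem inv_mem_oddCentralizer {x : G} (hx : x ∈ oddCentralizer G) : x⁻¹ ∈ oddCentralizer G :=
  ⟨by simpa using hx.1, fun t ht => (hx.2 t ht).inv_right⟩

theorem odd_ncard_orderOf_eq_two [Finite G] (h : Even (Nat.card G)) :
    Odd {g : G | orderOf g = 2}.ncard := by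
  classical
  have := Fintype.ofFinite G
  have hmod := Equiv.Perm.card_fixedPoints_modEq (p := 2) (n := 1)
    (f := ((·⁻¹) : Function.End G)) (funext inv_inv)
  have hfix : fixedPoints ((·⁻¹) : Function.End G) = insert 1 {g : G | orderOf g = 2} := by
    ext g
    rw [mem_fixedPoints, IsFixedPt, mem_insert_iff, mem_ofPred_eq, inv_eq_iff_mul_eq_one, ← sq,
      ← orderOf_dvd_iff_pow_eq_one, Nat.dvd_prime Nat.prime_two, orderOf_eq_one_iff]
  simp only [← Nat.card_eq_fintype_card, Nat.card_coe_set_eq, hfix] at hmod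
  rw [ncard_insert_of_notMem (by simp)] at hmod
  rw [Nat.odd_iff]
  have := Nat.even_iff.1 h
  unfold Nat.ModEq at hmod
  omega

theorem powerGraph_adj_of_pow_eq {a b : G} (hab : a ≠ b) {n : ℕ} (h : a ^ n = b) :
    (powerGraph G).Adj a b :=
  ⟨hab, Or.inr ⟨n, h⟩⟩

theorem powerGraph_adj_inv_s7 [Finite G] {g : G} (hg : g⁻¹ ≠ g) : (powerGraph G).Adj g g⁻¹ :=
  powerGraph_adj_of_pow_eq hg.symm (n := orderOf g - 1) <| eq_inv_of_mul_eq_one_left <| by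
    rw [← pow_succ, Nat.sub_add_cancel (orderOf_pos g), pow_orderOf_eq_one]

variable {s x : G}

theorem eq_one_of_inv_eq_of_odd_orderOf (hx : Odd (orderOf x)) (h : x⁻¹ = x) : x = 1 := by
  have hdvd : orderOf x ∣ 2 := orderOf_dvd_of_pow_eq_one (by rw [sq, ← inv_eq_iff_mul_eq_one, h])
  rcases (Nat.dvd_prime Nat.prime_two).1 hdvd with h1 | h2
  · exact orderOf_eq_one_iff.1 h1
  · exact absurd (h2 ▸ hx) (by decide)

theorem Commute.mul_inv_of_sq_eq_one (hsx : Commute s x) (hs : s ^ 2 = 1) :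
    (s * x)⁻¹ = s * x⁻¹ := by
  rw [mul_inv_rev, inv_eq_of_mul_eq_one_right (by rw [← sq, hs] : s * s = 1)]
  exact hsx.inv_right.eq.symm

theorem Commute.mul_pow_of_odd (hsx : Commute s x) (hs : s ^ 2 = 1) {k : ℕ} (hk : Odd k)
    (hxk : x ^ k = 1) : (s * x) ^ k = s := by
  obtain ⟨j, rfl⟩ := hk
  rw [hsx.mul_pow, hxk, mul_one, pow_succ, pow_mul, hs, one_pow, one_mul]

theorem Commute.mul_pow_of_even (hsx : Commute s x) (hs : s ^ 2 = 1) {k : ℕ} (hk : Even k) :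
    (s * x) ^ k = x ^ k := by
  obtain ⟨j, rfl⟩ := hk
  rw [hsx.mul_pow, ← two_mul, pow_mul, hs, one_pow, one_mul]

theorem eq_and_eq_of_mul_eq_mul {s' x' : G} (hs : s ^ 2 = 1) (hs' : s' ^ 2 = 1)
    (hx : Odd (orderOf x)) (hx' : Odd (orderOf x')) (hsx : Commute s x) (hsx' : Commute s' x')
    (h : s * x = s' * x') : s = s' ∧ x = x' := by
  have hs_eq : s = s' :=
    calc s = (s * x) ^ (orderOf x * orderOf x') :=
          (hsx.mul_pow_of_odd hs (hx.mul hx') (by rw [pow_mul, pow_orderOf_eq_one, one_pow])).symm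
      _ = (s' * x') ^ (orderOf x * orderOf x') := by rw [h]
      _ = s' := hsx'.mul_pow_of_odd hs' (hx.mul hx')
          (by rw [mul_comm, pow_mul, pow_orderOf_eq_one, one_pow])
  exact ⟨hs_eq, mul_left_cancel (hs_eq ▸ h)⟩

theorem powerGraph_adj_mul_left (hsx : Commute s x) (hs : s ^ 2 = 1) (hs1 : s ≠ 1)
    (hx : Odd (orderOf x)) : (powerGraph G).Adj (s * x) x :=
  powerGraph_adj_of_pow_eq (fun h => hs1 (mul_eq_right.1 h)) (n := orderOf x + 1) <| by
    rw [hsx.mul_pow_of_even hs hx.add_one, pow_succ, pow_orderOf_eq_one, one_mul]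

theorem powerGraph_adj_mul_right (hsx : Commute s x) (hs : s ^ 2 = 1) (hx : Odd (orderOf x))
    (hx1 : x ≠ 1) : (powerGraph G).Adj s (s * x) :=
  (powerGraph_adj_of_pow_eq (fun h => hx1 (mul_eq_left.1 h))
    (hsx.mul_pow_of_odd hs hx (pow_orderOf_eq_one x))).symm

variable [Finite G] {A C : Set G} {z ρ : G → G}

theorem powerGraph_adj_partner [DecidableEq G] (hA : ∀ s ∈ A, orderOf s = 2)
    (hC : C ⊆ oddCentralizer G) (hz : MapsTo z A C) (hρ : MapsTo ρ C A) (p : G × G)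
    (hp : p ∈ insert 1 A ×ˢ C) :
    (powerGraph G).Adj (p.1 * p.2) ((partner z ρ p).1 * (partner z ρ p).2) := by
  obtain ⟨s, y⟩ := p
  obtain ⟨hs, hy⟩ := hp
  have hsq : ∀ s ∈ A, s ^ 2 = 1 := fun s hs => hA s hs ▸ pow_orderOf_eq_one s
  have hne : ∀ s ∈ A, s ≠ 1 := fun s hs h => by simpa [h] using hA s hs
  have hcomm : ∀ s ∈ A, ∀ y ∈ C, Commute s y := fun s hs y hy => (hC hy).2 s (hA s hs)
  by_cases hs1 : s = 1
  · subst hs1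
    have hρy := hρ hy
    simpa [partner] using (powerGraph_adj_mul_left (hcomm _ hρy y hy) (hsq _ hρy) (hne _ hρy)
      (hC hy).1).symm
  have hsA : s ∈ A := hs.resolve_left hs1
  have hsy := hcomm s hsA y hy
  by_cases hyz : y = z s
  · simpa [partner, hs1, hyz] using powerGraph_adj_mul_left hsy (hsq s hsA) hs1 (hC hy).1
  by_cases hy1 : y = 1
  · subst hy1
    have hzs := hC (hz hsA)
    simpa [partner, hs1, hyz] using powerGraph_adj_mul_right (hcomm s hsA _ (hz hsA)).inv_right
      (hsq s hsA) (by simpa using hzs.1) (by simpa [eq_comm] using hyz)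
  by_cases hyzi : y = (z s)⁻¹
  · simp only [partner, if_neg hs1, if_neg hyz, if_neg hy1, if_pos hyzi, mul_one]
    exact (powerGraph_adj_mul_right hsy (hsq s hsA) (hC hy).1 hy1).symm
  · have hyinv : (s * y)⁻¹ ≠ s * y := by
      rw [hsy.mul_inv_of_sq_eq_one (hsq s hsA), Ne, mul_right_inj]
      exact fun h => hy1 (eq_one_of_inv_eq_of_odd_orderOf (hC hy).1 h)
    simpa [partner, hs1, hyz, hy1, hyzi, hsy.mul_inv_of_sq_eq_one (hsq s hsA)] using
      powerGraph_adj_inv_s7 hyinv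

theorem hasPerfectMatching_powerGraph_of_bijOn (hC : C ⊆ oddCentralizer G) (hC1 : 1 ∈ C)
    (hCinv : ∀ y ∈ C, y⁻¹ ∈ C) (hz : BijOn z {t | orderOf t = 2} C) :
    hasPerfectMatching (powerGraph G) := by
  classical
  set A := {t : G | orderOf t = 2}
  have hsq : ∀ s ∈ insert 1 A, s ^ 2 = 1 := by
    rintro s (rfl | hs)
    · exact one_pow 2
    · exact hs ▸ pow_orderOf_eq_one s
  have hcomm : ∀ s ∈ insert 1 A, ∀ y ∈ C, Commute s y := by
    rintro s (rfl | hs) y hy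
    · exact Commute.one_left y
    · exact (hC hy).2 s hs
  have hρ : MapsTo (invFunOn z A) C A := hz.surjOn.mapsTo_invFunOn
  refine hasPerfectMatching_of_injOn (m := fun p : G × G => p.1 * p.2) (D := insert 1 A ×ˢ C)
    (ψ := partner z (invFunOn z A)) (κ := (·⁻¹)) ?_
    (partner_mapsTo hz.mapsTo hρ hC1 hCinv)
    (partner_partner (by simp [A]) hz.mapsTo hρ hz.invOn_invFunOn
      fun y hy => eq_one_of_inv_eq_of_odd_orderOf (hC hy).1)
    (powerGraph_adj_partner (fun _ hs => hs) hC hz.mapsTo hρ) inv_involutive ?_ ?_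
  · rintro ⟨s, x⟩ ⟨hs, hx⟩ ⟨s', x'⟩ ⟨hs', hx'⟩ h
    exact Prod.ext_iff.2 (eq_and_eq_of_mul_eq_mul (hsq s hs) (hsq s' hs') (hC hx).1 (hC hx').1
      (hcomm s hs x hx) (hcomm s' hs' x' hx') h)
  · rintro g hg ⟨⟨s, y⟩, ⟨hs, hy⟩, h : s * y = g⁻¹⟩
    refine hg ⟨(s, y⁻¹), ⟨hs, hCinv y hy⟩, ?_⟩
    rw [← inv_inv g, ← h]
    exact ((hcomm s hs y hy).mul_inv_of_sq_eq_one (hsq s hs)).symm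
  · intro g hg
    refine powerGraph_adj_inv_s7 fun h => hg ⟨(g, 1), ⟨?_, hC1⟩, mul_one g⟩
    rwa [inv_eq_iff_mul_eq_one, ← sq, ← orderOf_dvd_iff_pow_eq_one, Nat.dvd_prime Nat.prime_two,
      orderOf_eq_one_iff] at h

end PowerGraph

theorem stmt7 (G : Type*) [Group G] [Fintype G] (h : Even (Fintype.card G))
    (hle : {t : G | orderOf t = 2}.ncard ≤
      {x : G | Odd (orderOf x) ∧ ∀ t : G, orderOf t = 2 → t * x = x * t}.ncard) :
    hasPerfectMatching (powerGraph G) := by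
  change _ ≤ (oddCentralizer G).ncard at hle
  obtain ⟨k, hk⟩ := odd_ncard_orderOf_eq_two (Nat.card_eq_fintype_card (α := G) ▸ h)
  obtain ⟨Y, hYO, hYinv, hYcard⟩ := exists_subset_inv_mem_ncard_eq (A := oddCentralizer G \ {1})
    (fun x hx => ⟨inv_mem_oddCentralizer hx.1, by simpa using hx.2⟩)
    (fun x hx h => hx.2 (eq_one_of_inv_eq_of_odd_orderOf hx.1.1 h)) (k := k)
    (by rw [ncard_sdiff_singleton_of_mem one_mem_oddCentralizer]; omega)
  have h1Y : (1 : G) ∉ Y := fun h => (hYO h).2 rfl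
  obtain ⟨z, hz⟩ := (toFinite {t : G | orderOf t = 2}).exists_bijOn_of_encard_eq
      (t := insert 1 Y) <| by
    rw [← (toFinite _).cast_ncard_eq, ← (toFinite _).cast_ncard_eq, ncard_insert_of_notMem h1Y,
      hYcard, hk]
  refine hasPerfectMatching_powerGraph_of_bijOn
    (insert_subset one_mem_oddCentralizer (hYO.trans sdiff_subset)) (mem_insert 1 Y) ?_ hz
  rintro y (rfl | hy)
  · simp
  · exact mem_insert_of_mem _ (hYinv y hy)
end

section
/- If G is a finite group whose power graph has matching number 1, then G is an elementary abelian 2-group or the cyclic group of order 3. -/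
open SimpleGraph

/-!
If the power graph has no two disjoint edges, an element `x` of order at least 4 gives the
disjoint edges `{x, x²}` and `{x³, 1}`, so every element satisfies `x² = 1` or has order 3.
If some `g` has order 3, the edge `{g, g²}` meets every other edge; for `x ∉ ⟨g⟩` the edge
`{x, x²}` avoids it, because `x² ∈ {g, g²}` would force `x` to have order 3 and
`x = (x²)² ∈ ⟨g⟩`. Hence `G = ⟨g⟩` is cyclic of order 3.
-/

lemma two_le_matchingNumber {V : Type*} [Finite V] (Γ : SimpleGraph V) {a b c d : V}
    (hab : Γ.Adj a b) (hcd : Γ.Adj c d)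
    (hac : a ≠ c) (had : a ≠ d) (hbc : b ≠ c) (hbd : b ≠ d) :
    2 ≤ matchingNumber Γ := by
  have hM := Subgraph.IsMatching.subgraphOfAdj hab
  have hN := Subgraph.IsMatching.subgraphOfAdj hcd
  have hdisj : Disjoint (Γ.subgraphOfAdj hab).support (Γ.subgraphOfAdj hcd).support := by
    rw [hM.support_eq_verts, hN.support_eq_verts, subgraphOfAdj_verts, subgraphOfAdj_verts,
      Set.disjoint_iff_forall_ne]
    rintro x (rfl | rfl) y (rfl | rfl) <;> assumption
  have hcard : (Γ.subgraphOfAdj hab ⊔ Γ.subgraphOfAdj hcd).edgeSet.ncard = 2 := by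
    rw [Subgraph.edgeSet_sup, edgeSet_subgraphOfAdj, edgeSet_subgraphOfAdj, Set.singleton_union]
    refine Set.ncard_pair fun he => ?_
    rcases Sym2.eq_iff.mp he with ⟨h, _⟩ | ⟨h, _⟩
    exacts [hac h, had h]
  refine le_csSup ⟨Nat.card (Sym2 V), ?_⟩ ⟨_, hM.sup hN hdisj, hcard⟩
  rintro n ⟨M, -, rfl⟩
  exact (Set.ncard_le_ncard (Set.subset_univ _)).trans_eq (Set.ncard_univ _)

lemma powerGraph_adj_of_pow_eq_s11 {G : Type*} [Group G] {x y : G} {n : ℕ} (hxy : x ≠ y)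
    (h : x ^ n = y) : (powerGraph G).Adj x y :=
  ⟨hxy, Or.inr ⟨n, h⟩⟩

section MatchingNumberLeOne

variable {G : Type*} [Group G] [Finite G] (hG : matchingNumber (powerGraph G) ≤ 1)
include hG

lemma orderOf_eq_three_of_sq_ne_one {x : G} (hx : x ^ 2 ≠ 1) : orderOf x = 3 := by
  have h1 : orderOf x ≠ 1 := fun h => hx (by rw [orderOf_eq_one_iff.mp h, one_pow])
  have h2 : orderOf x ≠ 2 := fun h => hx (h ▸ pow_orderOf_eq_one x)
  by_contra h3
  have h4 : 4 ≤ orderOf x := by have := orderOf_pos x; omega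
  have hne : ∀ i j, i < 4 ∧ j < 4 ∧ i ≠ j → x ^ i ≠ x ^ j := fun i j hij he =>
    hij.2.2 (pow_injOn_Iio_orderOf (Set.mem_Iio.mpr (by omega)) (Set.mem_Iio.mpr (by omega)) he)
  have e1 : (powerGraph G).Adj (x ^ 1) (x ^ 2) :=
    powerGraph_adj_of_pow_eq_s11 (n := 2) (hne 1 2 (by decide)) (by rw [← pow_mul])
  have e2 : (powerGraph G).Adj (x ^ 3) (x ^ 0) :=
    powerGraph_adj_of_pow_eq_s11 (n := 0) (hne 3 0 (by decide)) (by rw [← pow_mul])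
  have := two_le_matchingNumber _ e1 e2 (hne 1 3 (by decide)) (hne 1 0 (by decide))
    (hne 2 3 (by decide)) (hne 2 0 (by decide))
  omega

lemma mem_zpowers_of_orderOf_eq_three {g : G} (hg : orderOf g = 3) (x : G) :
    x ∈ Subgroup.zpowers g := by
  by_contra hx
  have hsq : ∀ k : ℕ, x ^ 2 = g ^ k → g ^ k = 1 := by
    intro k hk
    by_contra hgk
    have hx3 : x ^ 3 = 1 := orderOf_eq_three_of_sq_ne_one hG (hk ▸ hgk) ▸ pow_orderOf_eq_one x
    have hx4 : x = (g ^ k) ^ 2 := by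
      rw [← hk, ← pow_mul, show 2 * 2 = 3 + 1 from rfl, pow_succ, hx3, one_mul]
    exact hx (hx4 ▸ Subgroup.pow_mem _ (Subgroup.npow_mem_zpowers g k) 2)
  have hg1 : g ^ 1 ≠ 1 := pow_ne_one_of_lt_orderOf (by omega) (by omega)
  have hg2 : g ^ 2 ≠ 1 := pow_ne_one_of_lt_orderOf (by omega) (by omega)
  have hx1 : x ≠ 1 := fun h => hx (h ▸ Subgroup.one_mem _)
  have hgg : g ≠ g ^ 2 := fun h => (pow_one g ▸ hg1) (mul_eq_left.mp (by rw [← sq, ← h]))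
  have hxx : x ≠ x ^ 2 := fun h => hx1 (mul_eq_left.mp (by rw [← sq, ← h]))
  have := two_le_matchingNumber _ (powerGraph_adj_of_pow_eq_s11 hgg rfl)
    (powerGraph_adj_of_pow_eq_s11 hxx rfl)
    (fun h => hx (h ▸ Subgroup.mem_zpowers g))
    (fun h => hg1 (hsq 1 (by rw [pow_one, h])))
    (fun h => hx (h ▸ Subgroup.npow_mem_zpowers g 2))
    (fun h => hg2 (hsq 2 h.symm))
  omega

end MatchingNumberLeOne

theorem stmt11 (G : Type*) [Group G] [Fintype G]
    (h : matchingNumber (powerGraph G) = 1) :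
    (∀ g : G, g ^ 2 = 1) ∨ Nonempty (G ≃* Multiplicative (ZMod 3)) := by
  by_cases hall : ∀ g : G, g ^ 2 = 1
  · exact Or.inl hall
  obtain ⟨g, hg⟩ := not_forall.mp hall
  have hG : matchingNumber (powerGraph G) ≤ 1 := h.le
  have hg3 := orderOf_eq_three_of_sq_ne_one hG hg
  have hcard : Nat.card G = 3 :=
    (orderOf_eq_card_of_forall_mem_zpowers (mem_zpowers_of_orderOf_eq_three hG hg3)).symm.trans hg3
  exact Or.inr ⟨mulEquivOfPrimeCardEq hcard (by simp)⟩
end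

section
/- If G is a finite group of even order with exactly n involutions and |G| ≥ 2n·n!, then the commuting graph of G has a perfect matching. -/
open SimpleGraph

def commutingGraph (G : Type*) [Group G] : SimpleGraph G where
  Adj x y := x ≠ y ∧ x * y = y * x
  symm := ⟨fun x y ⟨h, c⟩ => ⟨h.symm, c.symm⟩⟩
  loopless := ⟨fun x ⟨h, _⟩ => h rfl⟩

/-!
Let `K` be the centralizer of the `n` involutions. Conjugation permutes the involutions with
kernel `K`, so `[G : K] ≤ n!` and therefore `|K| ≥ 2n`. Elements with `x² ≠ 1` are matched with
their inverses. If `K` contains an involution `z`, the solutions of `x² = 1` are matched by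
`x ↦ xz`. Otherwise `|K|` is odd, so `K \ {1}` has at least `2n ≥ n + 1` elements and contains no
solution of `x² = 1`; the `n + 1` solutions (an even number, since `|G|` is even) are matched
bijectively with an inverse-closed subset of `K \ {1}`, and everything else by inversion.
-/

open Finset Function

lemma Finset.exists_subset_card_eq_two_mul_of_involutive {α : Type*} [DecidableEq α]
    {f : α → α} (hf : Involutive f) {A : Finset α} (hA : ∀ a ∈ A, f a ∈ A)
    (hfix : ∀ a ∈ A, f a ≠ a) {m : ℕ} (hm : 2 * m ≤ #A) :
    ∃ B ⊆ A, #B = 2 * m ∧ ∀ b ∈ B, f b ∈ B := by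
  induction m with
  | zero => exact ⟨∅, empty_subset A, by simp, by simp⟩
  | succ m ih =>
    obtain ⟨B, hBA, hB, hBf⟩ := ih (by omega)
    obtain ⟨a, haA, haB⟩ := exists_mem_notMem_of_card_lt_card (s := B) (t := A) (by omega)
    have hfaB : f a ∉ B := fun h => haB (hf a ▸ hBf _ h)
    refine ⟨insert a (insert (f a) B), ?_, ?_, ?_⟩
    · simp only [insert_subset_iff]
      exact ⟨haA, hA a haA, hBA⟩
    · rw [card_insert_of_notMem (by simp [haB, (hfix a haA).symm]), card_insert_of_notMem hfaB,
        hB]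
      ring
    · simp only [mem_insert]
      rintro b (rfl | rfl | hb)
      · exact Or.inr (Or.inl rfl)
      · exact Or.inl (hf a)
      · exact Or.inr (Or.inr (hBf b hb))

namespace SimpleGraph

variable {V : Type*} {Γ : SimpleGraph V}

lemma exists_isMatching_of_involutive {s : Set V} {f : V → V} (hf : Involutive f)
    (hs : Set.MapsTo f s s) (hadj : ∀ v ∈ s, Γ.Adj v (f v)) :
    ∃ M : Γ.Subgraph, M.verts = s ∧ M.IsMatching := by
  refine ⟨{ verts := s
            Adj := fun v w => v ∈ s ∧ f v = w
            adj_sub := ?_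
            edge_vert := And.left
            symm := ⟨?_⟩ }, rfl, ?_⟩
  · rintro v _ ⟨hv, rfl⟩
    exact hadj v hv
  · rintro v _ ⟨hv, rfl⟩
    exact ⟨hs hv, hf v⟩
  · intro v hv
    exact ⟨f v, ⟨hv, rfl⟩, fun w hw => hw.2.symm⟩

lemma hasPerfectMatching_of_isMatching_compl {s : Set V} {M M' : Γ.Subgraph}
    (hM : M.IsMatching) (hM' : M'.IsMatching) (hv : M.verts = s) (hv' : M'.verts = sᶜ) :
    hasPerfectMatching Γ := by
  refine ⟨M ⊔ M', hM.sup hM' ?_, fun v => ?_⟩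
  · rw [hM.support_eq_verts, hM'.support_eq_verts, hv, hv']
    exact disjoint_compl_right
  · rw [Subgraph.verts_sup, hv, hv']
    simp

end SimpleGraph

section Group

variable {G : Type*} [Group G]

lemma setOf_sq_eq_one_eq_insert : {x : G | x ^ 2 = 1} = insert 1 {t | orderOf t = 2} := by
  ext x
  rcases eq_or_ne x 1 with rfl | hx
  · simp
  · simp only [Set.mem_ofPred_eq, Set.mem_insert_iff, hx, false_or]
    exact ⟨fun h => orderOf_eq_prime h hx, fun h => h ▸ pow_orderOf_eq_one x⟩

lemma inv_sq_eq_one {x : G} (hx : x ^ 2 = 1) : x⁻¹ ^ 2 = 1 := by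
  rw [inv_pow, hx, inv_one]

lemma Subgroup.eq_one_of_sq_eq_one_of_odd_card {K : Subgroup G} (hK : Odd (Nat.card K))
    {k : G} (hk : k ∈ K) (hk2 : k ^ 2 = 1) : k = 1 := by
  by_contra hk1
  apply hK.not_two_dvd_nat
  rw [← orderOf_eq_prime hk2 hk1, ← Subgroup.orderOf_mk (H := K) k hk]
  exact _root_.orderOf_dvd_natCard _

lemma Subgroup.exists_inv_closed_subset_of_odd_card {K : Subgroup G} (hK : Odd (Nat.card K))
    {m : ℕ} (hm : 2 * m < Nat.card K) :
    ∃ B : Finset G, (B : Set G) ⊆ K \ {1} ∧ #B = 2 * m ∧ ∀ b ∈ B, b⁻¹ ∈ B := by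
  classical
  have : Finite K := Nat.finite_of_card_ne_zero hK.pos.ne'
  have hfin : ((K : Set G) \ {1}).Finite := (Set.toFinite (K : Set G)).sdiff
  obtain ⟨B, hBA, hB, hBinv⟩ := exists_subset_card_eq_two_mul_of_involutive inv_involutive
    (A := hfin.toFinset) (m := m)
    (fun b hb => by
      simp only [Set.Finite.mem_toFinset, Set.mem_sdiff, Set.mem_singleton_iff] at hb ⊢
      exact ⟨K.inv_mem hb.1, inv_ne_one.mpr hb.2⟩)
    (fun b hb h => by
      simp only [Set.Finite.mem_toFinset, Set.mem_sdiff, Set.mem_singleton_iff] at hb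
      refine hb.2 (K.eq_one_of_sq_eq_one_of_odd_card hK hb.1 ?_)
      rw [sq]
      nth_rw 1 [← h]
      exact inv_mul_cancel b)
    (by
      rw [← Set.ncard_eq_toFinset_card _ hfin, Set.ncard_sdiff_singleton_of_mem K.one_mem,
        ← Nat.card_coe_set_eq]
      simp only [SetLike.coe_sort_coe]
      omega)
  exact ⟨B, fun b hb => by simpa using hBA hb, hB, hBinv⟩

theorem Subgroup.index_centralizer_le_factorial {s : Set G} [Finite s]
    (hs : ∀ g : G, ∀ t ∈ s, g * t * g⁻¹ ∈ s) :
    (centralizer s).index ≤ (Nat.card s).factorial := by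
  let φ : G →* Equiv.Perm s :=
    { toFun := fun g => (MulAut.conj g).toEquiv.subtypeEquiv fun t =>
        ⟨hs g t, fun h => by simpa [mul_assoc] using hs g⁻¹ _ h⟩
      map_one' := by ext; simp
      map_mul' := fun g h => by ext; simp [mul_assoc] }
  have hker : φ.ker = centralizer s := by
    ext g
    simp only [MonoidHom.mem_ker, mem_centralizer_iff, Equiv.ext_iff, Subtype.ext_iff,
      Subtype.forall]
    exact forall₂_congr fun t _ => by simp [φ, eq_mul_inv_iff_mul_eq, eq_comm]
  rw [← hker, Subgroup.index_ker, ← Nat.card_perm]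
  exact Nat.card_le_card_of_injective _ Subtype.val_injective

end Group

namespace commutingGraph

variable {G : Type*} [Group G]

lemma adj_inv {x : G} (hx : x ^ 2 ≠ 1) : (commutingGraph G).Adj x x⁻¹ := by
  refine ⟨fun h => hx ?_, by rw [mul_inv_cancel, inv_mul_cancel]⟩
  rw [sq]
  nth_rw 2 [h]
  exact mul_inv_cancel x

lemma exists_isMatching_compl {s : Set G} (hinv : ∀ x ∈ s, x⁻¹ ∈ s)
    (hsq : {x : G | x ^ 2 = 1} ⊆ s) :
    ∃ M : (commutingGraph G).Subgraph, M.verts = sᶜ ∧ M.IsMatching :=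
  exists_isMatching_of_involutive inv_involutive
    (fun x hx hxs => hx (inv_inv x ▸ hinv _ hxs)) (fun _ hx => adj_inv fun h => hx (hsq h))

lemma even_ncard_setOf_sq_eq_one [Finite G] (hG : Even (Nat.card G)) :
    Even {x : G | x ^ 2 = 1}.ncard := by
  classical
  have := Fintype.ofFinite G
  obtain ⟨M, hMv, hM⟩ :=
    exists_isMatching_compl (s := {x : G | x ^ 2 = 1}) (fun _ => inv_sq_eq_one) subset_rfl
  have hcompl := hM.even_card
  simp only [hMv, ← Set.ncard_eq_toFinset_card'] at hcompl
  rw [← Set.ncard_add_ncard_compl {x : G | x ^ 2 = 1}] at hG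
  exact (Nat.even_add.mp hG).mpr hcompl

theorem hasPerfectMatching_of_commute_involution {z : G} (hz : orderOf z = 2)
    (hcomm : ∀ x : G, x ^ 2 = 1 → Commute z x) : hasPerfectMatching (commutingGraph G) := by
  have hz2 : z * z = 1 := by rw [← sq, ← hz, pow_orderOf_eq_one]
  have hz1 : z ≠ 1 := by rintro rfl; simp at hz
  obtain ⟨M, hMv, hM⟩ := exists_isMatching_of_involutive (Γ := commutingGraph G)
    (s := {x : G | x ^ 2 = 1}) (f := (· * z)) (fun x => by simp [mul_assoc, hz2])
    (fun x (hx : x ^ 2 = 1) => show (x * z) ^ 2 = 1 by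
      rw [(hcomm x hx).symm.mul_pow, hx, sq z, hz2, one_mul])
    (fun x hx => ⟨fun h => hz1 (by simpa using h.symm),
      ((Commute.refl x).mul_right (hcomm x hx).symm).eq⟩)
  obtain ⟨M', hM'v, hM'⟩ :=
    exists_isMatching_compl (s := {x : G | x ^ 2 = 1}) (fun _ => inv_sq_eq_one) subset_rfl
  exact hasPerfectMatching_of_isMatching_compl hM hM' hMv hM'v

theorem hasPerfectMatching_of_odd_subgroup [Finite G] (hG : Even (Nat.card G)) (K : Subgroup G)
    (hK : Odd (Nat.card K)) (hcomm : ∀ k ∈ K, ∀ x : G, x ^ 2 = 1 → Commute k x)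
    (hle : {x : G | x ^ 2 = 1}.ncard ≤ Nat.card K) :
    hasPerfectMatching (commutingGraph G) := by
  set S := {x : G | x ^ 2 = 1}
  obtain ⟨m, hm⟩ : Even S.ncard := even_ncard_setOf_sq_eq_one hG
  obtain ⟨B, hBK, hB, hBinv⟩ :=
    K.exists_inv_closed_subset_of_odd_card hK (m := m) (by obtain ⟨r, hr⟩ := hK; omega)
  have hdisj : Disjoint S B := Set.disjoint_left.mpr fun x hxS hxB =>
    (hBK hxB).2 (K.eq_one_of_sq_eq_one_of_odd_card hK (hBK hxB).1 hxS)
  obtain ⟨e⟩ : Nonempty (S ≃ (B : Set G)) := Finite.card_eq.mp (by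
    rw [Nat.card_coe_set_eq, Nat.card_coe_set_eq, Set.ncard_coe_finset]
    omega)
  obtain ⟨M, hMv, hM⟩ := Subgraph.IsMatching.exists_of_disjoint_sets_of_equiv
    (G := commutingGraph G) hdisj e fun x =>
    ⟨hdisj.ne_of_mem x.2 (e x).2, (hcomm _ (hBK (e x).2).1 x x.2).eq.symm⟩
  obtain ⟨M', hM'v, hM'⟩ := exists_isMatching_compl (s := S ∪ B)
    (by rintro x (hx | hx); exacts [Or.inl (inv_sq_eq_one hx), Or.inr (hBinv x hx)])
    Set.subset_union_left
  exact hasPerfectMatching_of_isMatching_compl hM hM' hMv hM'v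

end commutingGraph

theorem stmt14 (G : Type*) [Group G] [Fintype G] (h : Even (Fintype.card G))
    (n : ℕ) (hn : {t : G | orderOf t = 2}.ncard = n)
    (hc : 2 * n * n.factorial ≤ Fintype.card G) :
    hasPerfectMatching (commutingGraph G) := by
  set K := Subgroup.centralizer {t : G | orderOf t = 2}
  have hcomm : ∀ k ∈ K, ∀ x : G, x ^ 2 = 1 → Commute k x := by
    intro k hk x hx
    rcases (Set.ext_iff.mp setOf_sq_eq_one_eq_insert x).mp hx with rfl | hx
    exacts [Commute.one_right k, (Subgroup.mem_centralizer_iff.mp hk x hx).symm]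
  have hindex : K.index ≤ n.factorial := by
    rw [← hn, ← Nat.card_coe_set_eq]
    exact Subgroup.index_centralizer_le_factorial fun g t ht => by
      rwa [Set.mem_ofPred_eq, ← MulAut.conj_apply, MulEquiv.orderOf_eq]
  have hK : 2 * n ≤ Nat.card K := by
    rw [← Nat.card_eq_fintype_card, ← K.index_mul_card] at hc
    refine Nat.le_of_mul_le_mul_right (hc.trans ?_) n.factorial_pos
    rw [mul_comm]
    exact Nat.mul_le_mul_left _ hindex
  by_cases hz : ∃ z ∈ K, orderOf z = 2
  · obtain ⟨z, hzK, hz⟩ := hz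
    exact commutingGraph.hasPerfectMatching_of_commute_involution hz (hcomm z hzK)
  have hKodd : Odd (Nat.card K) := Nat.odd_iff.mpr <| Nat.two_dvd_ne_zero.mp fun h2 =>
    let ⟨z, hz'⟩ := exists_prime_orderOf_dvd_card' (G := K) 2 h2
    hz ⟨z, z.2, by rwa [Subgroup.orderOf_coe]⟩
  have hn1 : 1 ≤ n := by
    obtain ⟨t, ht⟩ := exists_prime_orderOf_dvd_card 2 h.two_dvd
    exact hn ▸ (Set.ncard_pos).mpr ⟨t, ht⟩
  refine commutingGraph.hasPerfectMatching_of_odd_subgroup (by rwa [Nat.card_eq_fintype_card]) K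
    hKodd hcomm ?_
  rw [setOf_sq_eq_one_eq_insert, Set.ncard_insert_of_notMem (by simp), hn]
  obtain ⟨r, hr⟩ := hKodd
  omega
end

section
/- If G is a finite group of odd order, then the power graph of G × C₂ has a perfect matching. -/
/-
Pair `(g, c)` with `(g, c t)`, where `t` generates `C₂`. Since `g` has odd order `m`, the exponent
`m + 1` is even, so `(g, t) ^ (m + 1) = (g, 1)`: the two vertices of each pair are adjacent in the
power graph, and the pairs partition `G × C₂`.
-/

open SimpleGraph

theorem SimpleGraph.exists_isPerfectMatching_of_involutive {V : Type*} {Γ : SimpleGraph V}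
    (f : V → V) (hf : Function.Involutive f) (hadj : ∀ v, Γ.Adj v (f v)) :
    ∃ M : Γ.Subgraph, M.IsPerfectMatching := by
  let M : Γ.Subgraph :=
    { verts := Set.univ
      Adj := fun v w => f v = w
      adj_sub := by rintro v _ rfl; exact hadj v
      edge_vert := fun _ => Set.mem_univ _
      symm := ⟨fun v w h => by rw [← h, hf v]⟩ }
  exact ⟨M, Subgraph.isPerfectMatching_iff.mpr fun v => ⟨f v, rfl, fun _ h => Eq.symm h⟩⟩

theorem prod_pow_orderOf_add_one {G K : Type*} [Group G] [Group K] {g : G}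
    (hg : Odd (orderOf g)) {c : K} (hc : c ^ 2 = 1) : (g, c) ^ (orderOf g + 1) = (g, 1) := by
  obtain ⟨k, hk⟩ := even_iff_two_dvd.mp hg.add_one
  ext
  · rw [Prod.pow_fst, pow_succ, pow_orderOf_eq_one, one_mul]
  · rw [Prod.pow_snd, hk, pow_mul, hc, one_pow]

theorem powerGraph_prod_adj_mk_one {G K : Type*} [Group G] [Group K] {g : G}
    (hg : Odd (orderOf g)) {c : K} (hc : c ^ 2 = 1) (hc1 : c ≠ 1) :
    (powerGraph (G × K)).Adj (g, 1) (g, c) :=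
  ⟨fun h => hc1 (congrArg Prod.snd h).symm, .inl ⟨_, prod_pow_orderOf_add_one hg hc⟩⟩

theorem stmt17 (G : Type*) [Group G] [Fintype G] (h : Odd (Fintype.card G)) :
    hasPerfectMatching (powerGraph (G × Multiplicative (ZMod 2))) := by
  let t : Multiplicative (ZMod 2) := Multiplicative.ofAdd 1
  have ht : t * t = 1 := by decide
  refine exists_isPerfectMatching_of_involutive (fun x => (x.1, x.2 * t))
    (fun x => by simp only [mul_assoc, ht, mul_one]) ?_
  rintro ⟨g, c⟩
  have hadj : (powerGraph _).Adj (g, 1) (g, t) :=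
    powerGraph_prod_adj_mk_one (h.of_dvd_nat orderOf_dvd_card) (by decide) (by decide)
  obtain rfl | rfl : c = 1 ∨ c = t := by revert c; decide
  · simpa only [one_mul] using hadj
  · simpa only [ht] using hadj.symm
end
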